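/- Let f : ℝⁿ → ℝ be a C¹ function and c ∈ ℝ. Let Λ⁺ ⊆ S^{n-1} be a finite set of unit vectors, and let A be an n×n real diagonal matrix whose diagonal entries are positive and pairwise distinct, such that no element of X_c^{∞,+} is an eigenvector of A and, for each u ∈ Λ⁺, neither Au/‖Au‖ nor −Au/‖Au‖ belongs to V(u). Then there exist α, β, γ ∈ (0,1), R > 0, ε > 0 and η > 0 such that for every x ∈ ℝⁿ with ‖x‖ > R and |f(x) − c| < ε: (i) α‖x‖ < ⟨Ax/‖Ax‖, x⟩ < β‖x‖; and (ii) for each u ∈ Λ⁺ with ‖x/‖x‖ − u‖ < η, if ∇f(x) ≠ 0 then |⟨Ax/‖Ax‖, ∇f(x)/‖∇f(x)‖⟩| < γ. -/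

import Mathlib

open Filter Topology
open scoped RealInnerProductSpace

/-- The action of an `n × n` real matrix on Euclidean space `ℝⁿ`. -/
noncomputable def matApply {n : ℕ} (A : Matrix (Fin n) (Fin n) ℝ)
    (x : EuclideanSpace ℝ (Fin n)) : EuclideanSpace ℝ (Fin n) :=
  (EuclideanSpace.equiv (Fin n) ℝ).symm (A.mulVec (EuclideanSpace.equiv (Fin n) ℝ x))

/-- The set `X_c^{∞,+}`: unit vectors `u` which are limits of directions `x_k/‖x_k‖` of
sequences with `‖x_k‖ → ∞` and `f(x_k) → c`. -/
def dirsAtInfinity {n : ℕ} (f : EuclideanSpace ℝ (Fin n) → ℝ) (c : ℝ) :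
    Set (EuclideanSpace ℝ (Fin n)) :=
  {u | ‖u‖ = 1 ∧ ∃ x : ℕ → EuclideanSpace ℝ (Fin n),
    Tendsto (fun k => ‖x k‖) atTop atTop ∧
    Tendsto (fun k => (‖x k‖)⁻¹ • x k) atTop (𝓝 u) ∧
    Tendsto (fun k => f (x k)) atTop (𝓝 c)}

/-- The set `V(u)`: unit vectors `ν` which are limits of normalised gradients
`∇f(x_k)/‖∇f(x_k)‖` along sequences with `‖x_k‖ → ∞`, `x_k/‖x_k‖ → u` and `f(x_k) → c`. -/
def limGradDirs {n : ℕ} (f : EuclideanSpace ℝ (Fin n) → ℝ) (c : ℝ)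
    (u : EuclideanSpace ℝ (Fin n)) : Set (EuclideanSpace ℝ (Fin n)) :=
  {ν | ‖ν‖ = 1 ∧ ∃ x : ℕ → EuclideanSpace ℝ (Fin n),
    (∀ k, gradient f (x k) ≠ 0) ∧
    Tendsto (fun k => ‖x k‖) atTop atTop ∧
    Tendsto (fun k => (‖x k‖)⁻¹ • x k) atTop (𝓝 u) ∧
    Tendsto (fun k => f (x k)) atTop (𝓝 c) ∧
    Tendsto (fun k => (‖gradient f (x k)‖)⁻¹ • gradient f (x k)) atTop (𝓝 ν)}

/-!
Everything reduces to compactness of the unit sphere. Along the filter of points with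
`‖x‖ → ∞` and `f x → c`, the directions `x / ‖x‖` can only accumulate on `X_c^{∞,+}`, and near
`u ∈ Λ⁺` (where `∇f ≠ 0`) the normalised gradients only on `V(u)`. On the sphere,
`u ↦ ⟪Au/‖Au‖, u⟫` is continuous, positive, and `< 1` off the eigenvectors of `A`, while
`|⟪Au/‖Au‖, ν⟫| < 1` for unit `ν ≠ ±Au/‖Au‖`. By extracting convergent subsequences, a
continuous function that is `< 1` at all such limit points stays eventually below some `β < 1`.
-/

theorem eventually_nhdsLT_eventually_comp_lt {α E : Type*} [TopologicalSpace E]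
    [FirstCountableTopology E] {l : Filter α} [l.IsCountablyGenerated] {g : α → E} {K : Set E}
    (hK : IsCompact K) (hgK : ∀ᶠ a in l, g a ∈ K) {φ : E → ℝ} (hφ : ContinuousOn φ K) {b : ℝ}
    (hlim : ∀ p ∈ K, ∀ x : ℕ → α, Tendsto x atTop l → Tendsto (g ∘ x) atTop (𝓝 p) → φ p < b) :
    ∀ᶠ β in 𝓝[<] b, ∀ᶠ a in l, φ (g a) < β := by
  by_contra H
  have hfreq : ∃ᶠ q in 𝓝[<] b ×ˢ l, g q.2 ∈ K ∧ q.1 ≤ φ (g q.2) :=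
    ((not_eventually.1 fun h => H h.curry).and_eventually (hgK.prod_inr _)).mono
      fun q ⟨hlt, hK⟩ => ⟨hK, not_lt.1 hlt⟩
  obtain ⟨q, hq, hqK⟩ := frequently_iff_seq_forall.1 hfreq
  obtain ⟨p, hp, ψ, hψ, hgp⟩ := hK.tendsto_subseq fun k => (hqK k).1
  have hβ : Tendsto (fun k => (q (ψ k)).1) atTop (𝓝 b) :=
    (tendsto_nhdsWithin_iff.1 (tendsto_fst.comp hq)).1.comp hψ.tendsto_atTop
  have hφp : Tendsto (fun k => φ (g (q (ψ k)).2)) atTop (𝓝 (φ p)) :=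
    (hφ p hp).tendsto.comp (tendsto_nhdsWithin_iff.2 ⟨hgp, .of_forall fun k => (hqK (ψ k)).1⟩)
  exact (hlim p hp _ ((tendsto_snd.comp hq).comp hψ.tendsto_atTop) hgp).not_ge
    (le_of_tendsto_of_tendsto hβ hφp (.of_forall fun k => (hqK (ψ k)).2))

lemma Metric.isCountablyGenerated_nhdsSet {X : Type*} [PseudoMetricSpace X] {K : Set X}
    (hK : IsCompact K) : (𝓝ˢ K).IsCountablyGenerated := by
  refine HasBasis.isCountablyGenerated (p := fun _ : ℕ => True)
    ((Metric.hasBasis_nhdsSet_thickening hK).to_hasBasis (fun ε hε => ?_)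
      fun k _ => ⟨1 / (k + 1), Nat.one_div_pos_of_nat, subset_rfl⟩)
  obtain ⟨k, hk⟩ := exists_nat_one_div_lt hε
  exact ⟨k, trivial, Metric.thickening_mono hk.le K⟩

lemma exists_pos_eventually_dist_lt_imp {α X : Type*} [PseudoMetricSpace X] {l : Filter α}
    {g : α → X} {Λ : Set X} (hΛ : IsCompact Λ) {P : α → Prop}
    (h : ∀ᶠ a in l ⊓ comap g (𝓝ˢ Λ), P a) :
    ∃ η > 0, ∀ᶠ a in l, ∀ u ∈ Λ, dist (g a) u < η → P a := by
  obtain ⟨s, hs, t, ht, hst⟩ := eventually_inf.1 h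
  obtain ⟨η, hη, hηt⟩ := ((Metric.hasBasis_nhdsSet_thickening hΛ).comap g).mem_iff.1 ht
  exact ⟨η, hη, Eventually.mono hs fun a ha u hu hd =>
    hst a ⟨ha, hηt (Metric.mem_thickening_iff.2 ⟨u, hu, hd⟩)⟩⟩

section UnitDir

variable {E : Type*} [NormedAddCommGroup E] [NormedSpace ℝ E]

noncomputable def unitDir (v : E) : E := ‖v‖⁻¹ • v

lemma norm_unitDir {v : E} (hv : v ≠ 0) : ‖unitDir v‖ = 1 := norm_smul_inv_norm hv

lemma norm_smul_unitDir (v : E) : ‖v‖ • unitDir v = v := by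
  rcases eq_or_ne v 0 with rfl | hv
  · simp [unitDir]
  · rw [unitDir, smul_smul, mul_inv_cancel₀ (norm_ne_zero_iff.2 hv), one_smul]

lemma continuousAt_unitDir {v : E} (hv : v ≠ 0) : ContinuousAt unitDir v :=
  (continuous_norm.continuousAt.inv₀ (norm_ne_zero_iff.2 hv)).smul continuousAt_id

lemma unitDir_smul_of_pos {t : ℝ} (ht : 0 < t) (v : E) : unitDir (t • v) = unitDir v := by
  rw [unitDir, unitDir, norm_smul, Real.norm_of_nonneg ht.le, smul_smul, mul_inv, mul_right_comm,
    inv_mul_cancel₀ ht.ne', one_mul]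

lemma unitDir_map_unitDir {F : Type*} [FunLike F E E] [LinearMapClass F ℝ E E] (T : F) (x : E) :
    unitDir (T (unitDir x)) = unitDir (T x) := by
  rcases eq_or_ne x 0 with rfl | hx
  · simp [unitDir]
  · change unitDir (T (‖x‖⁻¹ • x)) = _
    rw [map_smul, unitDir_smul_of_pos (inv_pos.2 (norm_pos_iff.2 hx))]

lemma continuousAt_unitDir_map (T : E →L[ℝ] E) (hT : ∀ x ≠ 0, T x ≠ 0) {u : E} (hu : u ≠ 0) :
    ContinuousAt (fun x => unitDir (T x)) u :=
  (continuousAt_unitDir (hT u hu)).comp T.continuous.continuousAt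

end UnitDir

section InnerProduct

variable {E : Type*} [NormedAddCommGroup E] [InnerProductSpace ℝ E]

lemma inner_unitDir_lt_one {u v : E} (hu : ‖u‖ = 1) (hv : ∀ t : ℝ, v ≠ t • u) :
    ⟪unitDir v, u⟫ < 1 := by
  have hv0 : v ≠ 0 := by simpa using hv 0
  refine lt_of_le_of_ne ?_ fun h => hv ‖v‖ ?_
  · simpa [norm_unitDir hv0, hu] using real_inner_le_norm (unitDir v) u
  · rw [← (inner_eq_one_iff_of_norm_eq_one (norm_unitDir hv0) hu).1 h, norm_smul_unitDir]

lemma abs_inner_lt_one {p q : E} (hp : ‖p‖ = 1) (hq : ‖q‖ = 1) (hqp : q ≠ p) (hqnp : q ≠ -p) :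
    |⟪p, q⟫| < 1 := by
  refine lt_of_le_of_ne ?_ fun h => ?_
  · simpa [hp, hq] using abs_real_inner_le_norm p q
  · rcases eq_or_eq_neg_of_abs_eq h with h | h
    · exact hqp ((inner_eq_one_iff_of_norm_eq_one hp hq).1 h).symm
    · exact hqnp (neg_eq_iff_eq_neg.1 ((inner_eq_neg_one_iff_of_norm_eq_one hp hq).1 h).symm)

lemma inner_unitDir_map_self {F : Type*} [FunLike F E E] [LinearMapClass F ℝ E E] (T : F)
    (x : E) :
    ⟪unitDir (T x), x⟫ = ‖x‖ * ⟪unitDir (T (unitDir x)), unitDir x⟫ := by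
  rw [unitDir_map_unitDir, ← real_inner_smul_right, norm_smul_unitDir]

lemma continuousOn_inner_unitDir_map_self (T : E →L[ℝ] E) (hT : ∀ x ≠ 0, T x ≠ 0) :
    ContinuousOn (fun u => ⟪unitDir (T u), u⟫) (Metric.sphere 0 1) := fun u hu =>
  ((continuousAt_unitDir_map T hT (ne_zero_of_mem_unit_sphere ⟨u, hu⟩)).inner
    continuousAt_id).continuousWithinAt

lemma exists_pos_mul_norm_le_inner_unitDir [FiniteDimensional ℝ E] (T : E →L[ℝ] E)
    (hT : ∀ x ≠ 0, 0 < ⟪T x, x⟫) : ∃ a > 0, ∀ x, a * ‖x‖ ≤ ⟪unitDir (T x), x⟫ := by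
  have hT0 : ∀ x ≠ 0, T x ≠ 0 := fun x hx h => (hT x hx).ne' (by simp [h])
  obtain ⟨a, ha, hle⟩ := (isCompact_sphere (0 : E) 1).exists_forall_le'
      (continuousOn_inner_unitDir_map_self T hT0) fun u hu => by
    have hu0 : u ≠ 0 := ne_zero_of_mem_unit_sphere ⟨u, hu⟩
    rw [unitDir, real_inner_smul_left]
    exact mul_pos (inv_pos.2 (norm_pos_iff.2 (hT0 u hu0))) (hT u hu0)
  refine ⟨a, ha, fun x => ?_⟩
  rcases eq_or_ne x 0 with rfl | hx
  · simp
  · rw [inner_unitDir_map_self, mul_comm a]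
    exact mul_le_mul_of_nonneg_left (hle (unitDir x) (by simp [norm_unitDir hx])) (norm_nonneg x)

end InnerProduct

section LevelAtInfinity

variable {E : Type*} [NormedAddCommGroup E]

def levelAtInfinity (f : E → ℝ) (c : ℝ) : Filter E := comap norm atTop ⊓ comap f (𝓝 c)

variable {f : E → ℝ} {c : ℝ}

instance : (levelAtInfinity f c).IsCountablyGenerated := by
  unfold levelAtInfinity; infer_instance

lemma tendsto_levelAtInfinity {x : ℕ → E} :
    Tendsto x atTop (levelAtInfinity f c) ↔
      Tendsto (fun k => ‖x k‖) atTop atTop ∧ Tendsto (fun k => f (x k)) atTop (𝓝 c) := by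
  simp only [levelAtInfinity, tendsto_inf, tendsto_comap_iff, Function.comp_def]

lemma eventually_levelAtInfinity_iff {P : E → Prop} :
    (∀ᶠ x in levelAtInfinity f c, P x) ↔
      ∃ R > 0, ∃ ε > 0, ∀ x, R < ‖x‖ → |f x - c| < ε → P x := by
  rw [levelAtInfinity,
    (((atTop_basis_Ioi' 0).comap norm).inf (Metric.nhds_basis_ball.comap f)).eventually_iff]
  simp only [Prod.exists, Set.mem_inter_iff, Set.mem_preimage, Set.mem_Ioi, Metric.mem_ball,
    Real.dist_eq, and_imp, and_assoc]
  exact ⟨fun ⟨R, ε, hR, hε, h⟩ => ⟨R, hR, ε, hε, fun x => @h x⟩,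
    fun ⟨R, hR, ε, hε, h⟩ => ⟨R, ε, hR, hε, fun x => h x⟩⟩

lemma eventually_ne_zero_levelAtInfinity : ∀ᶠ x in levelAtInfinity f c, x ≠ 0 :=
  eventually_levelAtInfinity_iff.2 ⟨1, one_pos, 1, one_pos, fun _ hx _ =>
    norm_pos_iff.1 (one_pos.trans hx)⟩

end LevelAtInfinity

section EuclideanSpace

variable {n : ℕ} {f : EuclideanSpace ℝ (Fin n) → ℝ} {c : ℝ}

lemma mem_dirsAtInfinity_of_tendsto {x : ℕ → EuclideanSpace ℝ (Fin n)}
    {u : EuclideanSpace ℝ (Fin n)} (hx : Tendsto x atTop (levelAtInfinity f c)) (hu : ‖u‖ = 1)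
    (hxu : Tendsto (fun k => unitDir (x k)) atTop (𝓝 u)) : u ∈ dirsAtInfinity f c :=
  ⟨hu, x, (tendsto_levelAtInfinity.1 hx).1, hxu, (tendsto_levelAtInfinity.1 hx).2⟩

lemma mem_limGradDirs_of_tendsto {x : ℕ → EuclideanSpace ℝ (Fin n)}
    {u ν : EuclideanSpace ℝ (Fin n)} (hx : Tendsto x atTop (levelAtInfinity f c))
    (hgrad : ∀ᶠ k in atTop, gradient f (x k) ≠ 0) (hν : ‖ν‖ = 1)
    (hxu : Tendsto (fun k => unitDir (x k)) atTop (𝓝 u))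
    (hxν : Tendsto (fun k => unitDir (gradient f (x k))) atTop (𝓝 ν)) :
    ν ∈ limGradDirs f c u := by
  obtain ⟨N, hN⟩ := eventually_atTop.1 hgrad
  obtain ⟨hnorm, hf⟩ := tendsto_levelAtInfinity.1 hx
  refine ⟨hν, fun k => x (k + N), fun k => hN _ (Nat.le_add_left N k), ?_, ?_, ?_, ?_⟩
  · exact (tendsto_add_atTop_iff_nat N).2 hnorm
  · exact (tendsto_add_atTop_iff_nat N).2 hxu
  · exact (tendsto_add_atTop_iff_nat N).2 hf
  · exact (tendsto_add_atTop_iff_nat N).2 hxν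

theorem eventually_nhdsLT_one_inner_unitDir_lt
    (T : EuclideanSpace ℝ (Fin n) →L[ℝ] EuclideanSpace ℝ (Fin n)) (hT : ∀ x ≠ 0, T x ≠ 0)
    (heig : ∀ u ∈ dirsAtInfinity f c, ∀ t : ℝ, T u ≠ t • u) :
    ∀ᶠ β in 𝓝[<] 1, ∀ᶠ x in levelAtInfinity f c, ⟪unitDir (T x), x⟫ < β * ‖x‖ := by
  have hsphere : ∀ᶠ x in levelAtInfinity f c, unitDir x ∈ Metric.sphere 0 1 :=
    eventually_ne_zero_levelAtInfinity.mono fun x hx => by simp [norm_unitDir hx]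
  have key := eventually_nhdsLT_eventually_comp_lt (isCompact_sphere 0 1) hsphere
    (continuousOn_inner_unitDir_map_self T hT) fun u hu x hx hxu => by
      rw [mem_sphere_zero_iff_norm] at hu
      exact inner_unitDir_lt_one hu (heig u (mem_dirsAtInfinity_of_tendsto hx hu hxu))
  filter_upwards [key] with β hβ
  filter_upwards [hβ, eventually_ne_zero_levelAtInfinity] with x hx hx0
  rw [inner_unitDir_map_self, mul_comm β]
  exact mul_lt_mul_of_pos_left hx (norm_pos_iff.2 hx0)

theorem eventually_nhdsLT_one_abs_inner_unitDir_gradient_lt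
    (T : EuclideanSpace ℝ (Fin n) →L[ℝ] EuclideanSpace ℝ (Fin n)) (hT : ∀ x ≠ 0, T x ≠ 0)
    {Λ : Finset (EuclideanSpace ℝ (Fin n))}
    (hV : ∀ u ∈ Λ, unitDir (T u) ∉ limGradDirs f c u ∧ -unitDir (T u) ∉ limGradDirs f c u) :
    ∀ᶠ γ in 𝓝[<] 1, ∀ᶠ x in levelAtInfinity f c ⊓ comap unitDir (𝓝ˢ ↑Λ) ⊓
      𝓟 {x | gradient f x ≠ 0}, |⟪unitDir (T x), unitDir (gradient f x)⟫| < γ := by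
  set l := levelAtInfinity f c ⊓ comap unitDir (𝓝ˢ ↑Λ) ⊓ 𝓟 {x | gradient f x ≠ 0}
  have := Metric.isCountablyGenerated_nhdsSet Λ.finite_toSet.isCompact
  set K := Metric.sphere (0 : EuclideanSpace ℝ (Fin n)) 1
  have hK : ∀ᶠ x in l, (unitDir x, unitDir (gradient f x)) ∈ K ×ˢ K := by
    have hx0 : ∀ᶠ x in l, x ≠ 0 :=
      (inf_le_left.trans inf_le_left : l ≤ _) eventually_ne_zero_levelAtInfinity
    have hg0 : ∀ᶠ x in l, gradient f x ≠ 0 := (inf_le_right : l ≤ _) (mem_principal_self _)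
    filter_upwards [hx0, hg0] with x hx hg
    simp [K, norm_unitDir hx, norm_unitDir hg]
  have hcont : ContinuousOn (fun q => |⟪unitDir (T q.1), q.2⟫|) (K ×ˢ K) := fun q hq =>
    (((continuousAt_unitDir_map T hT (Metric.ne_of_mem_sphere hq.1 one_ne_zero)).comp
      continuousAt_fst).inner continuousAt_snd).abs.continuousWithinAt
  refine (eventually_nhdsLT_eventually_comp_lt
    ((isCompact_sphere 0 1).prod (isCompact_sphere 0 1)) hK hcont ?_).mono
    fun γ hγ => hγ.mono fun x hx => ?_
  · rintro ⟨u, ν⟩ ⟨hu, hν⟩ x hx hxq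
    have hu0 : u ≠ 0 := Metric.ne_of_mem_sphere hu one_ne_zero
    rw [mem_sphere_zero_iff_norm] at hν
    obtain ⟨⟨hxL, hxΛ⟩, hxg⟩ := by
      simpa only [l, tendsto_inf, tendsto_principal, tendsto_comap_iff] using hx
    have hxu : Tendsto (fun k => unitDir (x k)) atTop (𝓝 u) :=
      ((continuous_fst.tendsto _).comp hxq :)
    have hxν : Tendsto (fun k => unitDir (gradient f (x k))) atTop (𝓝 ν) :=
      ((continuous_snd.tendsto _).comp hxq :)
    have huΛ : u ∈ Λ := by
      by_contra h
      refine hxΛ.not_tendsto (disjoint_nhdsSet_nhds.2 ?_) hxu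
      rwa [Λ.finite_toSet.isClosed.closure_eq]
    have hνV := mem_limGradDirs_of_tendsto hxL hxg hν hxu hxν
    exact abs_inner_lt_one (norm_unitDir (hT u hu0)) hν
      (fun h => (hV u huΛ).1 (h ▸ hνV)) fun h => (hV u huΛ).2 (h ▸ hνV)
  · rwa [unitDir_map_unitDir] at hx

end EuclideanSpace

lemma inner_matApply_diagonal_self_pos {n : ℕ} {d : Fin n → ℝ} (hd : ∀ i, 0 < d i)
    {x : EuclideanSpace ℝ (Fin n)} (hx : x ≠ 0) : 0 < ⟪matApply (Matrix.diagonal d) x, x⟫ := by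
  obtain ⟨i, hi⟩ : ∃ i, x i ≠ 0 := by
    by_contra! h
    exact hx (PiLp.ext h)
  have hsum : ⟪matApply (Matrix.diagonal d) x, x⟫ = ∑ j, d j * x j ^ 2 := by
    simp only [matApply, PiLp.inner_apply]
    exact Finset.sum_congr rfl fun j _ => by simp [Matrix.mulVec_diagonal]; ring
  rw [hsum]
  exact Finset.sum_pos' (fun j _ => mul_nonneg (hd j).le (sq_nonneg _))
    ⟨i, Finset.mem_univ i, mul_pos (hd i) (pow_two_pos_of_ne_zero hi)⟩

theorem statement10_general {n : ℕ} (f : EuclideanSpace ℝ (Fin n) → ℝ)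
    (c : ℝ) (Λ : Finset (EuclideanSpace ℝ (Fin n)))
    (dvec : Fin n → ℝ) (hpos : ∀ i, 0 < dvec i)
    (heig : ∀ u ∈ dirsAtInfinity f c, ∀ t : ℝ,
      matApply (Matrix.diagonal dvec) u ≠ t • u)
    (hV : ∀ u ∈ Λ,
      (‖matApply (Matrix.diagonal dvec) u‖)⁻¹ • matApply (Matrix.diagonal dvec) u
        ∉ limGradDirs f c u ∧
      -((‖matApply (Matrix.diagonal dvec) u‖)⁻¹ • matApply (Matrix.diagonal dvec) u)
        ∉ limGradDirs f c u) :
    ∃ α ∈ Set.Ioo (0:ℝ) 1, ∃ β ∈ Set.Ioo (0:ℝ) 1, ∃ γ ∈ Set.Ioo (0:ℝ) 1,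
      ∃ R > (0:ℝ), ∃ ε > (0:ℝ), ∃ η > (0:ℝ),
      ∀ x : EuclideanSpace ℝ (Fin n), R < ‖x‖ → |f x - c| < ε →
        (α * ‖x‖ < ⟪(‖matApply (Matrix.diagonal dvec) x‖)⁻¹ • matApply (Matrix.diagonal dvec) x,
            x⟫ ∧
         ⟪(‖matApply (Matrix.diagonal dvec) x‖)⁻¹ • matApply (Matrix.diagonal dvec) x,
            x⟫ < β * ‖x‖) ∧
        ∀ u ∈ Λ, ‖(‖x‖)⁻¹ • x - u‖ < η → gradient f x ≠ 0 →
          |⟪(‖matApply (Matrix.diagonal dvec) x‖)⁻¹ • matApply (Matrix.diagonal dvec) x,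
             (‖gradient f x‖)⁻¹ • gradient f x⟫| < γ := by
  set T := Matrix.toEuclideanCLM (𝕜 := ℝ) (Matrix.diagonal dvec)
  have hTpos : ∀ x ≠ 0, 0 < ⟪T x, x⟫ := fun x hx => inner_matApply_diagonal_self_pos hpos hx
  have hT : ∀ x ≠ 0, T x ≠ 0 := fun x hx h => (hTpos x hx).ne' (by simp [h])
  obtain ⟨a, ha, hαa⟩ := exists_pos_mul_norm_le_inner_unitDir T hTpos
  obtain ⟨β, hβL, hβ⟩ :=
    ((eventually_nhdsLT_one_inner_unitDir_lt T hT heig).and (Ioo_mem_nhdsLT one_pos)).exists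
  obtain ⟨γ, hγL, hγ⟩ :=
    ((eventually_nhdsLT_one_abs_inner_unitDir_gradient_lt T hT hV).and
      (Ioo_mem_nhdsLT one_pos)).exists
  obtain ⟨η, hη, hγL⟩ :=
    exists_pos_eventually_dist_lt_imp Λ.finite_toSet.isCompact (eventually_inf_principal.1 hγL)
  obtain ⟨R, hR, ε, hε, hx⟩ := eventually_levelAtInfinity_iff.1
    ((hβL.and hγL).and eventually_ne_zero_levelAtInfinity)
  refine ⟨min (a / 2) (1 / 2), ⟨by positivity, by linarith [min_le_right (a / 2) (1 / 2)]⟩,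
    β, hβ, γ, hγ, R, hR, ε, hε, η, hη, fun x hxR hxc => ?_⟩
  obtain ⟨⟨hxβ, hxγ⟩, hx0⟩ := hx x hxR hxc
  refine ⟨⟨?_, hxβ⟩, fun u hu hxu hg => hxγ u hu (by rwa [dist_eq_norm]) hg⟩
  calc min (a / 2) (1 / 2) * ‖x‖ < a * ‖x‖ := by
        have : 0 < ‖x‖ := norm_pos_iff.2 hx0
        gcongr
        exact (min_le_left _ _).trans_lt (half_lt_self ha)
    _ ≤ _ := hαa x

/-- Let `f : ℝⁿ → ℝ` be `C¹`, `c ∈ ℝ`, `Λ⁺` a finite set of unit vectors, and `A` a diagonal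
matrix with positive, pairwise distinct diagonal entries, such that no element of
`X_c^{∞,+}` is an eigenvector of `A` and, for each `u ∈ Λ⁺`, neither `Au/‖Au‖` nor
`−Au/‖Au‖` belongs to `V(u)`.  Then there exist `α, β, γ ∈ (0,1)`, `R > 0`, `ε > 0`,
`η > 0` such that for every `x` with `‖x‖ > R` and `|f(x) − c| < ε`:
(i) `α‖x‖ < ⟨Ax/‖Ax‖, x⟩ < β‖x‖`; and (ii) for each `u ∈ Λ⁺` with `‖x/‖x‖ − u‖ < η`,
if `∇f(x) ≠ 0` then `|⟨Ax/‖Ax‖, ∇f(x)/‖∇f(x)‖⟩| < γ`. -/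
theorem statement10 {n : ℕ} (f : EuclideanSpace ℝ (Fin n) → ℝ) (hf : ContDiff ℝ 1 f)
    (c : ℝ) (Λ : Finset (EuclideanSpace ℝ (Fin n))) (hΛ : ∀ u ∈ Λ, ‖u‖ = 1)
    (dvec : Fin n → ℝ) (hpos : ∀ i, 0 < dvec i) (hinj : Function.Injective dvec)
    (heig : ∀ u ∈ dirsAtInfinity f c, ∀ t : ℝ,
      matApply (Matrix.diagonal dvec) u ≠ t • u)
    (hV : ∀ u ∈ Λ,
      (‖matApply (Matrix.diagonal dvec) u‖)⁻¹ • matApply (Matrix.diagonal dvec) u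
        ∉ limGradDirs f c u ∧
      -((‖matApply (Matrix.diagonal dvec) u‖)⁻¹ • matApply (Matrix.diagonal dvec) u)
        ∉ limGradDirs f c u) :
    ∃ α ∈ Set.Ioo (0:ℝ) 1, ∃ β ∈ Set.Ioo (0:ℝ) 1, ∃ γ ∈ Set.Ioo (0:ℝ) 1,
      ∃ R > (0:ℝ), ∃ ε > (0:ℝ), ∃ η > (0:ℝ),
      ∀ x : EuclideanSpace ℝ (Fin n), R < ‖x‖ → |f x - c| < ε →
        (α * ‖x‖ < ⟪(‖matApply (Matrix.diagonal dvec) x‖)⁻¹ • matApply (Matrix.diagonal dvec) x,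
            x⟫ ∧
         ⟪(‖matApply (Matrix.diagonal dvec) x‖)⁻¹ • matApply (Matrix.diagonal dvec) x,
            x⟫ < β * ‖x‖) ∧
        ∀ u ∈ Λ, ‖(‖x‖)⁻¹ • x - u‖ < η → gradient f x ≠ 0 →
          |⟪(‖matApply (Matrix.diagonal dvec) x‖)⁻¹ • matApply (Matrix.diagonal dvec) x,
             (‖gradient f x‖)⁻¹ • gradient f x⟫| < γ :=
  statement10_general f c Λ dvec hpos heig hV
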